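/- Let ρ : T³ → ℝ be smooth and everywhere positive and let p, e, f, g : T³ → ℝ³ be smooth vector fields. Then the integral over T³ of the cyclic sum over (e, f, g) of the expression (∇×p)·[ρ⁻¹ e × (∇×(f × (ρ⁻¹ g)))] + e·∇[(∇×p)·((ρ⁻¹ f) × (ρ⁻¹ g))] vanishes; that is, ∫_{T³} Σ_{cyc(e,f,g)} { (∇×p)·[ρ⁻¹ e × (∇×(f × ρ⁻¹ g))] + e·∇[(∇×p)·(ρ⁻¹ f × ρ⁻¹ g)] } dx = 0. -/

import Mathlib

open MeasureTheory Real
open scoped ContDiff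

noncomputable section

abbrev V3 : Type := Fin 3 → ℝ

def dot (a b : V3) : ℝ := ∑ i, a i * b i

def cross (a b : V3) : V3 :=
  ![a 1 * b 2 - a 2 * b 1, a 2 * b 0 - a 0 * b 2, a 0 * b 1 - a 1 * b 0]

/-- Partial derivative `∂ᵢ f` of a scalar field. -/
def pd (i : Fin 3) (f : V3 → ℝ) (x : V3) : ℝ := fderiv ℝ f x (Pi.single i 1)

/-- Gradient of a scalar field. -/
def grad (f : V3 → ℝ) (x : V3) : V3 := fun i => pd i f x

/-- Divergence of a vector field. -/
def vdiv (u : V3 → V3) (x : V3) : ℝ := ∑ i, pd i (fun y => u y i) x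

/-- Curl of a vector field. -/
def curl (u : V3 → V3) (x : V3) : V3 :=
  ![pd 1 (fun y => u y 2) x - pd 2 (fun y => u y 1) x,
    pd 2 (fun y => u y 0) x - pd 0 (fun y => u y 2) x,
    pd 0 (fun y => u y 1) x - pd 1 (fun y => u y 0) x]

/-- Directional derivative `(a·∇)u` of a vector field `u` along the vector `a`. -/
def dirDeriv (a : V3) (u : V3 → V3) (x : V3) : V3 :=
  fun i => ∑ j, a j * pd j (fun y => u y i) x

/-- The fundamental cell of the flat torus `T³ = ℝ³/(2πℤ)³`. -/
def T3 : Set V3 := Set.Icc 0 (fun _ => 2 * π)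

/-- Periodicity with period `2π` in each coordinate direction. -/
def Periodic3 {α : Type*} (f : V3 → α) : Prop :=
  ∀ (x : V3) (i : Fin 3), f (x + Pi.single i (2 * π)) = f x

/-- The first-derivative part of the triple-bracket integrand,
`(∇×p)·[ρ⁻¹ e × (∇×(f × ρ⁻¹ g))] + e·∇[(∇×p)·(ρ⁻¹ f × ρ⁻¹ g)]`. -/
def trm (ρ : V3 → ℝ) (p e f g : V3 → V3) (x : V3) : ℝ :=
  dot (curl p x)
      (cross ((ρ x)⁻¹ • e x) (curl (fun y => cross (f y) ((ρ y)⁻¹ • g y)) x))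
  + dot (e x)
      (grad (fun y => dot (curl p y) (cross ((ρ y)⁻¹ • f y) ((ρ y)⁻¹ • g y))) x)

/-! ### Auxiliary `pd`-calculus lemmas -/

lemma pd_add' {A B : V3 → ℝ} {x : V3} (i : Fin 3) (hA : DifferentiableAt ℝ A x)
    (hB : DifferentiableAt ℝ B x) :
    pd i (fun y => A y + B y) x = pd i A x + pd i B x := by
  simp [pd, fderiv_fun_add hA hB]

lemma pd_sub' {A B : V3 → ℝ} {x : V3} (i : Fin 3) (hA : DifferentiableAt ℝ A x)
    (hB : DifferentiableAt ℝ B x) :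
    pd i (fun y => A y - B y) x = pd i A x - pd i B x := by
  simp [pd, fderiv_fun_sub hA hB]

lemma pd_mul' {A B : V3 → ℝ} {x : V3} (i : Fin 3) (hA : DifferentiableAt ℝ A x)
    (hB : DifferentiableAt ℝ B x) :
    pd i (fun y => A y * B y) x = pd i A x * B x + A x * pd i B x := by
  simp only [pd, fderiv_fun_mul hA hB, ContinuousLinearMap.add_apply,
    ContinuousLinearMap.smul_apply, smul_eq_mul]
  ring

lemma pd_smooth {A : V3 → ℝ} (hA : ContDiff ℝ ∞ A) (j : Fin 3) :
    ContDiff ℝ ∞ (fun y => pd j A y) :=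
  (hA.fderiv_right (m := ∞) (by decide)).clm_apply contDiff_const

lemma pd_pd_comm {A : V3 → ℝ} (hA : ContDiff ℝ ∞ A) (x : V3) (j k : Fin 3) :
    pd j (fun y => pd k A y) x = pd k (fun y => pd j A y) x := by
  have hs : IsSymmSndFDerivAt ℝ A x := hA.contDiffAt.isSymmSndFDerivAt (by simp; decide)
  have hd : DifferentiableAt ℝ (fderiv ℝ A) x :=
    ((hA.fderiv_right (m := ∞) (by decide)).differentiable (by decide)) x
  simp only [pd]
  rw [fderiv_clm_apply hd (differentiableAt_const _),
      fderiv_clm_apply hd (differentiableAt_const _)]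
  simpa using hs.eq (Pi.single j 1) (Pi.single k 1)

lemma pd_shift {A : V3 → ℝ} (hA : Differentiable ℝ A) (v : V3) (h : ∀ y, A (y + v) = A y)
    (i : Fin 3) (x : V3) : pd i A (x + v) = pd i A x := by
  have h1 : HasFDerivAt (fun y : V3 => y + v) (ContinuousLinearMap.id ℝ V3) x :=
    (hasFDerivAt_id x).add_const v
  have h2 : HasFDerivAt (fun y => A (y + v))
      ((fderiv ℝ A (x + v)).comp (ContinuousLinearMap.id ℝ V3)) x :=
    ((hA (x + v)).hasFDerivAt).comp x h1
  have h3 : (fun y => A (y + v)) = A := funext h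
  rw [h3] at h2
  have h4 := h2.fderiv
  simp only [ContinuousLinearMap.comp_id] at h4
  rw [pd, pd, ← h4]

/-! ### The flux vector field and the key pointwise divergence identity -/

/-- `X = (B·(σf×σg))e + (B·(σe×σf))g + (B·(σg×σe))f` with `B = ∇×p`, `σ = ρ⁻¹`. -/
def Xf (σ : V3 → ℝ) (p e f g : V3 → V3) (x : V3) : V3 :=
  (dot (curl p x) (cross (σ x • f x) (σ x • g x))) • e x
  + (dot (curl p x) (cross (σ x • e x) (σ x • f x))) • g x
  + (dot (curl p x) (cross (σ x • g x) (σ x • e x))) • f x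

/-- `trm` with `ρ⁻¹` replaced by a free scalar field `σ`. -/
def trmS (σ : V3 → ℝ) (p e f g : V3 → V3) (x : V3) : ℝ :=
  dot (curl p x)
      (cross (σ x • e x) (curl (fun y => cross (f y) (σ y • g y)) x))
  + dot (e x)
      (grad (fun y => dot (curl p y) (cross (σ y • f y) (σ y • g y))) x)

set_option maxHeartbeats 4000000 in
/-- The key pointwise identity: the cyclic sum of the first-derivative terms is
exactly twice the divergence of the flux field `Xf`. -/
lemma key (σ : V3 → ℝ) (p e f g : V3 → V3)
    (hσ : ContDiff ℝ ∞ σ) (hp : ContDiff ℝ ∞ p) (he : ContDiff ℝ ∞ e)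
    (hf : ContDiff ℝ ∞ f) (hg : ContDiff ℝ ∞ g) (x : V3) :
    trmS σ p e f g x + trmS σ p g e f x + trmS σ p f g e x
      = 2 * vdiv (Xf σ p e f g) x := by
  have hσd : Differentiable ℝ σ := hσ.differentiable (by decide)
  have hpk : ∀ k, Differentiable ℝ fun y => p y k :=
    fun k => ((contDiff_pi.1 hp) k).differentiable (by decide)
  have hek : ∀ k, Differentiable ℝ fun y => e y k :=
    fun k => ((contDiff_pi.1 he) k).differentiable (by decide)
  have hfk : ∀ k, Differentiable ℝ fun y => f y k :=
    fun k => ((contDiff_pi.1 hf) k).differentiable (by decide)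
  have hgk : ∀ k, Differentiable ℝ fun y => g y k :=
    fun k => ((contDiff_pi.1 hg) k).differentiable (by decide)
  have hpdd : ∀ (j k : Fin 3), Differentiable ℝ (fun y => pd j (fun z => p z k) y) :=
    fun j k => (pd_smooth ((contDiff_pi.1 hp) k) j).differentiable (by decide)
  have sw : ∀ (l j k : Fin 3),
      pd j (fun y => pd k (fun z => p z l) y) x = pd k (fun y => pd j (fun z => p z l) y) x :=
    fun l j k => pd_pd_comm ((contDiff_pi.1 hp) l) x j k
  simp only [trmS, Xf, vdiv, dot, cross, curl, grad, Pi.add_apply, Pi.smul_apply, smul_eq_mul,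
    Fin.sum_univ_three, Matrix.cons_val_zero, Matrix.cons_val_one, Matrix.head_cons,
    Matrix.cons_val_two, Matrix.tail_cons]
  simp (disch := fun_prop) only [pd_add', pd_sub', pd_mul']
  simp only [sw 0 1 0, sw 1 1 0, sw 2 1 0, sw 0 2 0, sw 1 2 0, sw 2 2 0,
    sw 0 2 1, sw 1 2 1, sw 2 2 1]
  ring

/-! ### Properties of the flux field -/

lemma Xf_smooth {σ : V3 → ℝ} {p e f g : V3 → V3}
    (hσ : ContDiff ℝ ∞ σ) (hp : ContDiff ℝ ∞ p) (he : ContDiff ℝ ∞ e)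
    (hf : ContDiff ℝ ∞ f) (hg : ContDiff ℝ ∞ g) (i : Fin 3) :
    ContDiff ℝ ∞ (fun y => Xf σ p e f g y i) := by
  have hpk : ∀ k, ContDiff ℝ ∞ fun y => p y k := contDiff_pi.1 hp
  have hek : ∀ k, ContDiff ℝ ∞ fun y => e y k := contDiff_pi.1 he
  have hfk : ∀ k, ContDiff ℝ ∞ fun y => f y k := contDiff_pi.1 hf
  have hgk : ∀ k, ContDiff ℝ ∞ fun y => g y k := contDiff_pi.1 hg
  have hpdd : ∀ (j k : Fin 3), ContDiff ℝ ∞ (fun y => pd j (fun z => p z k) y) :=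
    fun j k => pd_smooth (hpk k) j
  have hS : ∀ u v : V3 → V3, (∀ k, ContDiff ℝ ∞ fun y => u y k) →
      (∀ k, ContDiff ℝ ∞ fun y => v y k) →
      ContDiff ℝ ∞ (fun y => dot (curl p y) (cross (σ y • u y) (σ y • v y))) := by
    intro u v hu hv
    simp only [dot, cross, curl, Fin.sum_univ_three, Pi.smul_apply, smul_eq_mul,
      Matrix.cons_val_zero, Matrix.cons_val_one, Matrix.head_cons,
      Matrix.cons_val_two, Matrix.tail_cons]
    fun_prop
  have hXi : (fun y => Xf σ p e f g y i) =
      fun y => dot (curl p y) (cross (σ y • f y) (σ y • g y)) * e y i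
        + dot (curl p y) (cross (σ y • e y) (σ y • f y)) * g y i
        + dot (curl p y) (cross (σ y • g y) (σ y • e y)) * f y i := by
    funext y; simp [Xf]
  rw [hXi]
  exact (((hS f g hfk hgk).mul (hek i)).add ((hS e f hek hfk).mul (hgk i))).add
    ((hS g e hgk hek).mul (hfk i))

lemma Xf_periodic {σ : V3 → ℝ} {p e f g : V3 → V3} (hp : ContDiff ℝ ∞ p)
    (hσper : Periodic3 σ) (hpper : Periodic3 p) (heper : Periodic3 e)
    (hfper : Periodic3 f) (hgper : Periodic3 g) :
    Periodic3 (Xf σ p e f g) := by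
  intro x i
  have hcurl : curl p (x + Pi.single i (2 * π)) = curl p x := by
    have hpk : ∀ k, Differentiable ℝ fun y => p y k :=
      fun k => ((contDiff_pi.1 hp) k).differentiable (by decide)
    have hper : ∀ (k : Fin 3) (y : V3), p (y + Pi.single i (2 * π)) k = p y k :=
      fun k y => congrFun (hpper y i) k
    simp only [curl]
    rw [pd_shift (hpk 2) _ (hper 2), pd_shift (hpk 1) _ (hper 1), pd_shift (hpk 0) _ (hper 0),
        pd_shift (hpk 2) _ (hper 2), pd_shift (hpk 1) _ (hper 1), pd_shift (hpk 0) _ (hper 0)]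
  simp only [Xf, hcurl, hσper x i, heper x i, hfper x i, hgper x i]

/-! ### Integral of a divergence over the fundamental cell -/

lemma insertNth_shift (i : Fin 3) (c : ℝ) (x : Fin 2 → ℝ) :
    (Fin.insertNth i c x : V3) = (Fin.insertNth i (0:ℝ) x : V3) + Pi.single i c := by
  funext j
  refine Fin.succAboveCases i ?_ ?_ j
  · simp
  · intro k
    simp [Pi.single_eq_of_ne (Fin.succAbove_ne i k)]

lemma integral_vdiv_zero (X : V3 → V3) (hX : ∀ i, ContDiff ℝ ∞ (fun y => X y i))
    (hper : Periodic3 X) : ∫ x in T3, vdiv X x = 0 := by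
  have hle : (0 : V3) ≤ (fun _ => 2 * π) := fun i => by positivity
  have hXd : Differentiable ℝ X := fun x =>
    differentiableAt_pi.2 fun i => ((hX i).differentiable (by decide)) x
  have hcomp : ∀ (x : V3) (i : Fin 3),
      fderiv ℝ X x (Pi.single i 1) i = pd i (fun y => X y i) x := by
    intro x i
    have h : fderiv ℝ X x = ContinuousLinearMap.pi fun i => fderiv ℝ (fun y => X y i) x :=
      fderiv_pi fun i => ((hX i).differentiable (by decide)) x
    rw [h, ContinuousLinearMap.pi_apply, pd]
  have hdiveq : (fun x => ∑ i, fderiv ℝ X x (Pi.single i 1) i) = fun x => vdiv X x := by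
    funext x; simp [vdiv, hcomp]
  have hcont : Continuous fun x => vdiv X x := by
    refine continuous_finset_sum _ fun i _ => ?_
    exact (pd_smooth (hX i) i).continuous
  have Hi : IntegrableOn (fun x => ∑ i, fderiv ℝ X x (Pi.single i 1) i)
      (Set.Icc (0:V3) (fun _ => 2 * π)) := by
    rw [hdiveq]
    exact ContinuousOn.integrableOn_compact isCompact_Icc hcont.continuousOn
  have hdt := integral_divergence_of_hasFDerivAt_off_countable (n := 2)
    (0:V3) (fun _ => 2 * π) hle X (fun x => fderiv ℝ X x) ∅ Set.countable_empty
    (continuous_pi fun i => (hX i).continuous).continuousOn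
    (fun x _ => (hXd x).hasFDerivAt) Hi
  have hT3 : T3 = Set.Icc (0:V3) (fun _ => 2 * π) := rfl
  rw [hT3, ← hdiveq, hdt]
  refine Finset.sum_eq_zero fun i _ => ?_
  have heq : ∀ x : Fin 2 → ℝ,
      X (Fin.insertNth i ((fun _ => 2 * π : V3) i) x) i = X (Fin.insertNth i ((0:V3) i) x) i := by
    intro x
    have h5 : (Fin.insertNth i (2 * π) x : V3)
        = (Fin.insertNth i (0:ℝ) x : V3) + Pi.single i (2 * π) :=
      insertNth_shift i (2 * π) x
    show X (Fin.insertNth i (2 * π) x) i = X (Fin.insertNth i (0:ℝ) x) i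
    rw [h5, hper]
  simp only [heq, sub_self]

/-! ### Main theorem -/

theorem cyclic_sum_vanishes
    (ρ : V3 → ℝ) (p e f g : V3 → V3)
    (hρ : ContDiff ℝ ∞ ρ) (hρpos : ∀ x, 0 < ρ x) (hρper : Periodic3 ρ)
    (hp : ContDiff ℝ ∞ p) (hpper : Periodic3 p)
    (he : ContDiff ℝ ∞ e) (heper : Periodic3 e)
    (hf : ContDiff ℝ ∞ f) (hfper : Periodic3 f)
    (hg : ContDiff ℝ ∞ g) (hgper : Periodic3 g) :
    ∫ x in T3, (trm ρ p e f g x + trm ρ p g e f x + trm ρ p f g e x) = 0 := by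
  have hσ : ContDiff ℝ ∞ (fun y => (ρ y)⁻¹) := hρ.inv fun x => (hρpos x).ne'
  have hσper : Periodic3 (fun y => (ρ y)⁻¹) := fun x i => by simp [hρper x i]
  have hkey : ∀ x : V3, trm ρ p e f g x + trm ρ p g e f x + trm ρ p f g e x
      = 2 * vdiv (Xf (fun y => (ρ y)⁻¹) p e f g) x := fun x =>
    key (fun y => (ρ y)⁻¹) p e f g hσ hp he hf hg x
  simp only [hkey]
  rw [MeasureTheory.integral_const_mul,
    integral_vdiv_zero (Xf (fun y => (ρ y)⁻¹) p e f g)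
      (fun i => Xf_smooth hσ hp he hf hg i)
      (Xf_periodic hp hσper hpper heper hfper hgper), mul_zero]

end
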